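/- Let k be a field, A_k a k-algebra with involution a ↦ a*, E a finite-dimensional A_k-module with a nondegenerate alternating bilinear form b satisfying b(ax,y) = b(x,a*y). If S is a totally isotropic A_k-submodule of E maximal with that property, and S⊥ its orthogonal, then the A_k-module S⊥/S is semisimple and its only totally isotropic A_k-submodule (for the induced form) is 0. -/

import Mathlib

/-!
Write `Vᗮ` for the `b`-orthogonal of `V`; `S ≤ Sᗮ` since `S` is isotropic. For any `A`-submodule
`M` with `S ≤ M ≤ Sᗮ`, the isotropic submodule `S ⊔ (M ⊓ Mᗮ)` contains `S`, so maximality gives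
`M ⊓ Mᗮ = S`. Nondegeneracy gives `dim Vᗮ = dim E - dim V`, hence
`dim (M ⊔ Mᗮ) = dim E - dim (M ⊓ Mᗮ) = dim Sᗮ`, i.e. `M ⊔ Mᗮ = Sᗮ`. Thus `Mᗮ` is a complement of
`M` in the interval `[S, Sᗮ]`, which is the lattice of submodules of `Sᗮ/S`: this module is
semisimple. An isotropic submodule of `Sᗮ/S` pulls back to an isotropic submodule containing `S`,
so it is `0` by maximality.
-/

section

variable {k A E : Type*} [Field k] [Ring A] [Algebra k A]
  [AddCommGroup E] [Module k E] [Module A E] [IsScalarTower k A E]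
  [FiniteDimensional k E]

def orthogonalSubmodule (σ : A →ₗ[k] A)
    (b : E →ₗ[k] E →ₗ[k] k)
    (hcompat : ∀ (a : A) (x y : E), b (a • x) y = b x (σ a • y))
    (S : Submodule A E) : Submodule A E where
  carrier := {x | ∀ y ∈ S, b x y = 0}
  add_mem' := by
    intro u v hu hv y hy
    rw [map_add, LinearMap.add_apply, hu y hy, hv y hy, add_zero]
  zero_mem' := by
    intro y hy
    rw [map_zero, LinearMap.zero_apply]
  smul_mem' := by
    intro a x hx y hy
    rw [hcompat a x y]
    exact hx _ (S.smul_mem _ hy)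

end

namespace Submodule

variable {R M : Type*} [Ring R] [AddCommGroup M] [Module R M] {S T : Submodule R M}

def subquotientPreimage (N : Submodule R (T ⧸ S.comap T.subtype)) : Submodule R M :=
  (N.comap (S.comap T.subtype).mkQ).map T.subtype

lemma mem_subquotientPreimage {N : Submodule R (T ⧸ S.comap T.subtype)} {x : T} :
    (x : M) ∈ subquotientPreimage N ↔ (S.comap T.subtype).mkQ x ∈ N :=
  ⟨fun ⟨_, hy, hyx⟩ => Subtype.ext hyx ▸ hy, fun h => ⟨x, h, rfl⟩⟩

lemma subquotientPreimage_le (N : Submodule R (T ⧸ S.comap T.subtype)) :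
    subquotientPreimage N ≤ T :=
  map_subtype_le T _

lemma le_subquotientPreimage (hST : S ≤ T) (N : Submodule R (T ⧸ S.comap T.subtype)) :
    S ≤ subquotientPreimage N := fun s hs =>
  mem_subquotientPreimage (x := ⟨s, hST hs⟩) |>.mpr <| by
    have h0 : (S.comap T.subtype).mkQ ⟨s, hST hs⟩ = 0 := (Quotient.mk_eq_zero _).mpr hs
    rw [h0]
    exact N.zero_mem

lemma eq_bot_of_subquotientPreimage_le {N : Submodule R (T ⧸ S.comap T.subtype)}
    (h : subquotientPreimage N ≤ S) : N = ⊥ := by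
  rw [eq_bot_iff]
  intro w hw
  obtain ⟨x, rfl⟩ := mkQ_surjective _ w
  exact (Quotient.mk_eq_zero _).mpr (h (mem_subquotientPreimage.mpr hw))

theorem isSemisimpleModule_subquotient (hST : S ≤ T)
    (hcompl : ∀ U : Submodule R M, S ≤ U → U ≤ T → ∃ C ≤ T, U ⊓ C ≤ S ∧ T ≤ U ⊔ C) :
    IsSemisimpleModule R (T ⧸ S.comap T.subtype) := by
  refine (isSemisimpleModule_iff _ _).mpr ⟨fun N => ?_⟩
  obtain ⟨C, hCT, hinf, hsup⟩ :=
    hcompl _ (le_subquotientPreimage hST N) (subquotientPreimage_le N)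
  refine ⟨(C.comap T.subtype).map (S.comap T.subtype).mkQ, ?_, ?_⟩
  · rw [disjoint_def]
    rintro _ hN ⟨x, hxC, rfl⟩
    exact (Quotient.mk_eq_zero _).mpr (hinf ⟨mem_subquotientPreimage.mpr hN, hxC⟩)
  · rw [codisjoint_iff, eq_top_iff]
    rintro w -
    obtain ⟨x, rfl⟩ := mkQ_surjective _ w
    obtain ⟨u, hu, c, hc, hx⟩ := mem_sup.mp (hsup x.2)
    have hx' : x = ⟨u, subquotientPreimage_le N hu⟩ + ⟨c, hCT hc⟩ := Subtype.ext hx.symm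
    rw [hx', map_add]
    exact add_mem_sup (mem_subquotientPreimage.mp hu) ⟨_, hc, rfl⟩

end Submodule

section Orthogonal

variable {k A E : Type*} [Field k] [Ring A] [Algebra k A]
  [AddCommGroup E] [Module k E] [Module A E] {σ : A →ₗ[k] A} {b : E →ₗ[k] E →ₗ[k] k}
  {hcompat : ∀ (a : A) (x y : E), b (a • x) y = b x (σ a • y)}

local notation:1200 V "ᗮᵇ" => orthogonalSubmodule σ b hcompat V

lemma orthogonalSubmodule_anti {V W : Submodule A E} (h : V ≤ W) : Wᗮᵇ ≤ Vᗮᵇ :=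
  fun _ hx y hy => hx y (h hy)

lemma le_orthogonalSubmodule_comm (hb : b.IsRefl) {V W : Submodule A E} :
    V ≤ Wᗮᵇ ↔ W ≤ Vᗮᵇ :=
  ⟨fun h x hx y hy => hb y x (h hy x hx), fun h x hx y hy => hb y x (h hy x hx)⟩

lemma orthogonalSubmodule_sup (hb : b.IsRefl) (V W : Submodule A E) :
    (V ⊔ W)ᗮᵇ = Vᗮᵇ ⊓ Wᗮᵇ :=
  le_antisymm (le_inf (orthogonalSubmodule_anti le_sup_left)
      (orthogonalSubmodule_anti le_sup_right))
    ((le_orthogonalSubmodule_comm hb).mp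
      (sup_le ((le_orthogonalSubmodule_comm hb).mp inf_le_left)
        ((le_orthogonalSubmodule_comm hb).mp inf_le_right)))

lemma inf_orthogonalSubmodule_le_of_maximal (hb : b.IsRefl) {S M : Submodule A E}
    (hiso : S ≤ Sᗮᵇ) (hmax : ∀ S' : Submodule A E, S' ≤ S'ᗮᵇ → S ≤ S' → S' = S)
    (hM : M ≤ Sᗮᵇ) : M ⊓ Mᗮᵇ ≤ S := by
  set X := M ⊓ Mᗮᵇ
  have hXS : X ≤ Sᗮᵇ := inf_le_left.trans hM
  have hXX : X ≤ Xᗮᵇ := inf_le_right.trans (orthogonalSubmodule_anti inf_le_left)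
  have hSX : S ⊔ X ≤ (S ⊔ X)ᗮᵇ := by
    rw [orthogonalSubmodule_sup hb]
    exact le_inf (sup_le hiso hXS) (sup_le ((le_orthogonalSubmodule_comm hb).mp hXS) hXX)
  exact le_sup_right.trans (hmax _ hSX le_sup_left).le

section FiniteDimensional

variable [IsScalarTower k A E]

lemma orthogonalSubmodule_restrictScalars (hb : b.IsRefl) (V : Submodule A E) :
    (Vᗮᵇ).restrictScalars k = LinearMap.BilinForm.orthogonal b (V.restrictScalars k) := by
  ext x
  exact ⟨fun hx y hy => hb x y (hx y hy), fun hx y hy => hb y x (hx y hy)⟩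

variable [FiniteDimensional k E]

lemma finrank_orthogonalSubmodule (hb : b.IsRefl) (hnd : LinearMap.BilinForm.Nondegenerate b)
    (V : Submodule A E) :
    Module.finrank k ((Vᗮᵇ).restrictScalars k)
      = Module.finrank k E - Module.finrank k (V.restrictScalars k) := by
  rw [orthogonalSubmodule_restrictScalars hb]
  exact LinearMap.BilinForm.finrank_orthogonal hnd _

lemma sup_orthogonalSubmodule_self (hb : b.IsRefl) (hnd : LinearMap.BilinForm.Nondegenerate b)
    (M : Submodule A E) : M ⊔ Mᗮᵇ = (M ⊓ Mᗮᵇ)ᗮᵇ := by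
  have hle : M ⊔ Mᗮᵇ ≤ (M ⊓ Mᗮᵇ)ᗮᵇ :=
    sup_le ((le_orthogonalSubmodule_comm hb).mp inf_le_right)
      (orthogonalSubmodule_anti inf_le_left)
  apply Submodule.restrictScalars_injective k
  apply Submodule.eq_of_le_of_finrank_le (Submodule.restrictScalars_mono k hle)
  have hdim := Submodule.finrank_sup_add_finrank_inf_eq (M.restrictScalars k)
    ((Mᗮᵇ).restrictScalars k)
  rw [← Submodule.restrictScalars_sup, ← Submodule.restrictScalars_inf,
    finrank_orthogonalSubmodule hb hnd] at hdim
  have hM := Submodule.finrank_le (M.restrictScalars k)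
  rw [finrank_orthogonalSubmodule hb hnd]
  omega

lemma sup_orthogonalSubmodule_eq_of_maximal (hb : b.IsRefl)
    (hnd : LinearMap.BilinForm.Nondegenerate b) {S M : Submodule A E}
    (hiso : S ≤ Sᗮᵇ) (hmax : ∀ S' : Submodule A E, S' ≤ S'ᗮᵇ → S ≤ S' → S' = S)
    (hSM : S ≤ M) (hM : M ≤ Sᗮᵇ) : M ⊔ Mᗮᵇ = Sᗮᵇ := by
  rw [sup_orthogonalSubmodule_self hb hnd,
    le_antisymm (inf_orthogonalSubmodule_le_of_maximal hb hiso hmax hM)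
      (le_inf hSM ((le_orthogonalSubmodule_comm hb).mp hM))]

end FiniteDimensional

end Orthogonal

section

variable {k A E : Type*} [Field k] [Ring A] [Algebra k A]
  [AddCommGroup E] [Module k E] [Module A E] [IsScalarTower k A E]
  [FiniteDimensional k E]

theorem semisimple_of_maximal_isotropic_general
    (σ : A →ₗ[k] A)
    (b : E →ₗ[k] E →ₗ[k] k)
    (halt : ∀ x : E, b x x = 0)
    (hnd : ∀ x : E, (∀ y : E, b x y = 0) → x = 0)
    (hcompat : ∀ (a : A) (x y : E), b (a • x) y = b x (σ a • y))
    (S : Submodule A E)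
    (hiso : ∀ x ∈ S, ∀ y ∈ S, b x y = 0)
    (hmax : ∀ S' : Submodule A E, (∀ x ∈ S', ∀ y ∈ S', b x y = 0) → S ≤ S' → S' = S) :
    IsSemisimpleModule A
      ((orthogonalSubmodule σ b hcompat S) ⧸
        (S.comap (orthogonalSubmodule σ b hcompat S).subtype)) ∧
    ∀ Y : Submodule A
        ((orthogonalSubmodule σ b hcompat S) ⧸
          (S.comap (orthogonalSubmodule σ b hcompat S).subtype)),
      (∀ x y : (orthogonalSubmodule σ b hcompat S),
        (S.comap (orthogonalSubmodule σ b hcompat S).subtype).mkQ x ∈ Y →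
        (S.comap (orthogonalSubmodule σ b hcompat S).subtype).mkQ y ∈ Y →
        b (x : E) (y : E) = 0) → Y = ⊥ := by
  have hb : b.IsRefl := LinearMap.IsAlt.isRefl halt
  have hnd' : LinearMap.BilinForm.Nondegenerate b := hb.nondegenerate_iff_separatingLeft.mpr hnd
  refine ⟨Submodule.isSemisimpleModule_subquotient hiso fun M hSM hM => ?_, fun Y hY => ?_⟩
  · exact ⟨_, orthogonalSubmodule_anti hSM,
      inf_orthogonalSubmodule_le_of_maximal hb hiso hmax hM,
      (sup_orthogonalSubmodule_eq_of_maximal hb hnd' hiso hmax hSM hM).ge⟩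
  · refine Submodule.eq_bot_of_subquotientPreimage_le
      (hmax _ ?_ (Submodule.le_subquotientPreimage hiso Y)).le
    rintro _ ⟨x, hx, rfl⟩ _ ⟨y, hy, rfl⟩
    exact hY x y hx hy

/-- Let `A` be a `k`-algebra with a `k`-linear involution `σ`, `E` a finite-dimensional
`A`-module with a nondegenerate alternating bilinear form `b` with
`b(ax,y) = b(x,a*y)`.  If `S` is a maximal totally isotropic `A`-submodule and `S⊥` its
orthogonal, then `S⊥/S` is a semisimple `A`-module whose only totally isotropic
`A`-submodule (for the induced form) is `0`. -/
theorem semisimple_of_maximal_isotropic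
    (σ : A →ₗ[k] A) (hσ2 : ∀ a, σ (σ a) = a) (hσm : ∀ a b, σ (a * b) = σ b * σ a)
    (b : E →ₗ[k] E →ₗ[k] k)
    (halt : ∀ x : E, b x x = 0)
    (hnd : ∀ x : E, (∀ y : E, b x y = 0) → x = 0)
    (hcompat : ∀ (a : A) (x y : E), b (a • x) y = b x (σ a • y))
    (S : Submodule A E)
    (hiso : ∀ x ∈ S, ∀ y ∈ S, b x y = 0)
    (hmax : ∀ S' : Submodule A E, (∀ x ∈ S', ∀ y ∈ S', b x y = 0) → S ≤ S' → S' = S) :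
    IsSemisimpleModule A
      ((orthogonalSubmodule σ b hcompat S) ⧸
        (S.comap (orthogonalSubmodule σ b hcompat S).subtype)) ∧
    ∀ Y : Submodule A
        ((orthogonalSubmodule σ b hcompat S) ⧸
          (S.comap (orthogonalSubmodule σ b hcompat S).subtype)),
      (∀ x y : (orthogonalSubmodule σ b hcompat S),
        (S.comap (orthogonalSubmodule σ b hcompat S).subtype).mkQ x ∈ Y →
        (S.comap (orthogonalSubmodule σ b hcompat S).subtype).mkQ y ∈ Y →
        b (x : E) (y : E) = 0) → Y = ⊥ :=
  semisimple_of_maximal_isotropic_general σ b halt hnd hcompat S hiso hmax
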